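/- Let the weight Λ be as in the context. Then for every η with |η| > 1 and every t ≥ 0, 1 ≤ 1/Λ(t,η) ≤ e^{(3π/20) |η|^{1/3}}. -/

import Mathlib

open Real Set

noncomputable section

/-- The weight `Λ` together with its defining properties, as described in the context:
`Λ(t,η) = 1` for `|η| ≤ 1`, `Λ(t,-η) = Λ(t,η)`; and for `η > 1` it is continuous and
nondecreasing in `t`, equal to `1` for `t ≥ 2η`, constant on the initial time interval
`[0, 2η/(2E(η^{2/3})+1)]`, and on each interval `[2η/(2k+1), 2η/(2k-1)]` it solves the
stated ODE (with rate `1/20 · (1+|t-η/k|²)⁻¹` for `1 ≤ k ≤ E(η^{1/3})` and rate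
`1/20 · (η/k³)(1+|t-η/k|²)⁻¹` for `E(η^{1/3}) < k ≤ E(η^{2/3})`). -/
structure LambdaData where
  L : ℝ → ℝ → ℝ
  pos : ∀ t η, 0 < L t η
  one_of_small : ∀ t η, |η| ≤ 1 → L t η = 1
  symm : ∀ t η, L t (-η) = L t η
  mono : ∀ η, 1 < η → Monotone fun t => L t η
  cont : ∀ η, 1 < η → Continuous fun t => L t η
  one_late : ∀ η, 1 < η → ∀ t, 2 * η ≤ t → L t η = 1
  const_init : ∀ η, 1 < η →
    ∀ t ∈ Set.Icc (0 : ℝ) (2 * η / (2 * (⌊η ^ ((2:ℝ)/3)⌋₊ : ℝ) + 1)), L t η = L 0 η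
  ode_low : ∀ η, 1 < η → ∀ k : ℕ, 1 ≤ k → k ≤ ⌊η ^ ((1:ℝ)/3)⌋₊ →
    ∀ t ∈ Set.Icc (2 * η / (2 * (k : ℝ) + 1)) (2 * η / (2 * (k : ℝ) - 1)),
      HasDerivWithinAt (fun τ => L τ η)
        (1 / 20 * (1 + |t - η / (k : ℝ)| ^ 2)⁻¹ * L t η)
        (Set.Icc (2 * η / (2 * (k : ℝ) + 1)) (2 * η / (2 * (k : ℝ) - 1))) t
  ode_high : ∀ η, 1 < η → ∀ k : ℕ, ⌊η ^ ((1:ℝ)/3)⌋₊ < k → k ≤ ⌊η ^ ((2:ℝ)/3)⌋₊ →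
    ∀ t ∈ Set.Icc (2 * η / (2 * (k : ℝ) + 1)) (2 * η / (2 * (k : ℝ) - 1)),
      HasDerivWithinAt (fun τ => L τ η)
        (1 / 20 * (η / (k : ℝ) ^ 3) * (1 + |t - η / (k : ℝ)| ^ 2)⁻¹ * L t η)
        (Set.Icc (2 * η / (2 * (k : ℝ) + 1)) (2 * η / (2 * (k : ℝ) - 1))) t

/-! On each interval `[2η/(2k+1), 2η/(2k-1)]` the logarithmic derivative of `Λ` is
`c_k (1 + (t - η/k)²)⁻¹`, whose integral over the whole line is `c_k π` (an increment of
`arctan`). Chaining these intervals from `t = 2η`, where `Λ = 1`, down to the initial interval,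
where `Λ` is constant, gives `1 ≤ Λ(0,η) exp(π ∑ c_k)`. The rates `c_k = 1/20` for
`k ≤ E = E(η^{1/3})` contribute `E/20`, and the rates `c_k = η/(20k³)` for larger `k` contribute
at most `η/(40E(E+1)) ≤ E/10`, since `∑_{k>E} k⁻³ ≤ 1/(2E(E+1))` by telescoping. -/

theorem eq_mul_exp_sub_of_hasDerivWithinAt {f G r : ℝ → ℝ} {a b : ℝ} (hab : a ≤ b)
    (hG : ∀ t ∈ Icc a b, HasDerivAt G (r t) t)
    (hf : ∀ t ∈ Icc a b, HasDerivWithinAt f (r t * f t) (Icc a b) t) :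
    f b = f a * exp (G b - G a) := by
  set g : ℝ → ℝ := fun t => f t * exp (-G t)
  have hg : ∀ t ∈ Icc a b, HasDerivWithinAt g 0 (Icc a b) t := by
    intro t ht
    exact ((hf t ht).mul (hG t ht).fun_neg.exp.hasDerivWithinAt).congr_deriv (by ring)
  have hgb : g b = g a :=
    constant_of_has_deriv_right_zero (fun t ht => (hg t ht).continuousWithinAt)
      (fun t ht => (hg t (Ico_subset_Icc_self ht)).mono_of_mem_nhdsWithin
        (Icc_mem_nhdsGE_of_mem ht)) b (right_mem_Icc.2 hab)
  calc f b = g b * exp (G b) := by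
        simp only [g, mul_assoc, ← exp_add, neg_add_cancel, exp_zero, mul_one]
    _ = f a * exp (G b - G a) := by
        rw [hgb, mul_assoc, ← exp_add, neg_add_eq_sub]

theorem le_mul_exp_mul_pi_of_hasDerivWithinAt {f : ℝ → ℝ} {a b c m : ℝ} (hab : a ≤ b)
    (hc : 0 ≤ c) (hfa : 0 ≤ f a)
    (hf : ∀ t ∈ Icc a b, HasDerivWithinAt f (c * (1 + |t - m| ^ 2)⁻¹ * f t) (Icc a b) t) :
    f b ≤ f a * exp (c * π) := by
  have hG : ∀ t ∈ Icc a b,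
      HasDerivAt (fun t => c * arctan (t - m)) (c * (1 + |t - m| ^ 2)⁻¹) t := by
    intro t _
    rw [sq_abs]
    simpa [Function.comp_def] using
      ((hasDerivAt_arctan' (t - m)).comp t ((hasDerivAt_id t).sub_const m)).const_mul c
  rw [eq_mul_exp_sub_of_hasDerivWithinAt hab hG hf]
  gcongr
  nlinarith [arctan_lt_pi_div_two (b - m), neg_pi_div_two_lt_arctan (a - m)]

theorem sum_Ioc_inv_pow_three_le_sub {E F : ℕ} (hE : 0 < E) (hEF : E ≤ F) :
    ∑ k ∈ Finset.Ioc E F, ((k : ℝ) ^ 3)⁻¹ ≤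
      (2 * E * (E + 1) : ℝ)⁻¹ - (2 * F * (F + 1) : ℝ)⁻¹ := by
  induction F, hEF using Nat.le_induction with
  | base => simp
  | succ F hEF ih =>
    have hF : (0 : ℝ) < F := by exact_mod_cast hE.trans_le hEF
    -- `k⁻³ ≤ ((k-1)k(k+1))⁻¹ = (2(k-1)k)⁻¹ - (2k(k+1))⁻¹`
    have step : (((F + 1 : ℕ) : ℝ) ^ 3)⁻¹ ≤
        (2 * F * (F + 1) : ℝ)⁻¹ - (2 * (F + 1 : ℕ) * ((F + 1 : ℕ) + 1) : ℝ)⁻¹ := by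
      push_cast
      rw [inv_sub_inv (by positivity) (by positivity), inv_eq_one_div,
        div_le_div_iff₀ (by positivity) (by positivity)]
      nlinarith [hF]
    rw [Finset.sum_Ioc_succ_top hEF]
    linarith

theorem sum_Ioc_inv_pow_three_le {E F : ℕ} (hE : 0 < E) :
    ∑ k ∈ Finset.Ioc E F, ((k : ℝ) ^ 3)⁻¹ ≤ (2 * E * (E + 1) : ℝ)⁻¹ := by
  rcases le_total E F with hEF | hFE
  · have : 0 ≤ (2 * F * (F + 1) : ℝ)⁻¹ := by positivity
    linarith [sum_Ioc_inv_pow_three_le_sub hE hEF]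
  · rw [Finset.Ioc_eq_empty (not_lt.2 hFE), Finset.sum_empty]
    positivity

theorem floor_add_pow_three_div_le {x : ℝ} (hx : 1 ≤ x) :
    (⌊x⌋₊ : ℝ) + x ^ 3 / (2 * ⌊x⌋₊ * (⌊x⌋₊ + 1)) ≤ 3 * x := by
  have hfloor : 1 ≤ ⌊x⌋₊ := Nat.le_floor (by simpa using hx)
  set E : ℝ := (⌊x⌋₊ : ℝ)
  have hE1 : 1 ≤ E := Nat.one_le_cast.2 hfloor
  have hEx : E ≤ x := Nat.floor_le (by linarith)
  have hxE : x < E + 1 := Nat.lt_floor_add_one x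
  have hcube : x ^ 3 ≤ (E + 1) ^ 3 := pow_le_pow_left₀ (by linarith) hxE.le 3
  have hE : (E + 1) ^ 3 ≤ 2 * E * (2 * E * (E + 1)) := by
    nlinarith [mul_nonneg (mul_nonneg (by linarith : 0 ≤ E + 1) (by linarith : 0 ≤ E - 1))
      (by linarith : 0 ≤ 3 * E + 1)]
  have : x ^ 3 / (2 * E * (E + 1)) ≤ 2 * E := by
    rw [div_le_iff₀ (by positivity)]
    linarith
  linarith

/-- The rate `c_k` of the ODE satisfied by `log Λ(·,η)` on `[2η/(2k+1), 2η/(2k-1)]`. -/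
def lambdaRate (η : ℝ) (k : ℕ) : ℝ :=
  if k ≤ ⌊η ^ ((1:ℝ)/3)⌋₊ then 1 / 20 else 1 / 20 * (η / k ^ 3)

theorem lambdaRate_nonneg {η : ℝ} (hη : 0 ≤ η) (k : ℕ) : 0 ≤ lambdaRate η k := by
  unfold lambdaRate
  split_ifs <;> positivity

theorem sum_lambdaRate_le {η : ℝ} (hη : 1 < η) :
    ∑ k ∈ Finset.Ioc 0 ⌊η ^ ((2:ℝ)/3)⌋₊, lambdaRate η k ≤ 3 / 20 * η ^ ((1:ℝ)/3) := by
  set x := η ^ ((1:ℝ)/3)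
  set E := ⌊x⌋₊
  have hx : 1 ≤ x := one_le_rpow hη.le (by norm_num)
  have hE : 0 < E := Nat.floor_pos.2 hx
  have hEF : E ≤ ⌊η ^ ((2:ℝ)/3)⌋₊ :=
    Nat.floor_le_floor (rpow_le_rpow_of_exponent_le hη.le (by norm_num))
  have hηx : η = x ^ 3 := by
    rw [← rpow_natCast, ← rpow_mul (by linarith)]
    norm_num
  have hlow : ∑ k ∈ Finset.Ioc 0 E, lambdaRate η k = E / 20 := by
    rw [Finset.sum_congr rfl fun k hk =>
      show lambdaRate η k = 1 / 20 from if_pos (Finset.mem_Ioc.1 hk).2]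
    simp only [Finset.sum_const, Nat.card_Ioc, nsmul_eq_mul, Nat.sub_zero]
    ring
  have hhigh : ∑ k ∈ Finset.Ioc E ⌊η ^ ((2:ℝ)/3)⌋₊, lambdaRate η k
      ≤ η / (2 * E * (E + 1)) / 20 := by
    rw [Finset.sum_congr rfl fun k hk =>
      show lambdaRate η k = 1 / 20 * (η / k ^ 3) from if_neg (not_le.2 (Finset.mem_Ioc.1 hk).1)]
    calc _ = η / 20 * ∑ k ∈ Finset.Ioc E ⌊η ^ ((2:ℝ)/3)⌋₊, ((k : ℝ) ^ 3)⁻¹ := by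
          rw [Finset.mul_sum]
          exact Finset.sum_congr rfl fun k _ => by ring
      _ ≤ η / 20 * (2 * E * (E + 1) : ℝ)⁻¹ :=
          mul_le_mul_of_nonneg_left (sum_Ioc_inv_pow_three_le hE) (by positivity)
      _ = η / (2 * E * (E + 1)) / 20 := by ring
  rw [← Finset.sum_Ioc_consecutive _ (Nat.zero_le E) hEF, hlow]
  have := floor_add_pow_three_div_le hx
  rw [← hηx] at this
  linarith

namespace LambdaData

variable (Λ : LambdaData) {η : ℝ}

theorem L_abs (t η : ℝ) : Λ.L t |η| = Λ.L t η := by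
  rcases abs_choice η with h | h <;> rw [h]
  exact Λ.symm t η

theorem L_le_one (t η : ℝ) : Λ.L t η ≤ 1 := by
  rw [← Λ.L_abs]
  rcases le_or_gt |η| 1 with h | h
  · exact (Λ.one_of_small t _ (by rwa [abs_abs])).le
  · calc Λ.L t |η| ≤ Λ.L (max t (2 * |η|)) |η| := Λ.mono _ h (le_max_left _ _)
      _ = 1 := Λ.one_late _ h _ (le_max_right _ _)

theorem hasDerivWithinAt_L (hη : 1 < η) {k : ℕ} (hk : 0 < k) (hkF : k ≤ ⌊η ^ ((2:ℝ)/3)⌋₊)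
    {t : ℝ} (ht : t ∈ Icc (2 * η / (2 * (k : ℝ) + 1)) (2 * η / (2 * (k : ℝ) - 1))) :
    HasDerivWithinAt (fun τ => Λ.L τ η) (lambdaRate η k * (1 + |t - η / k| ^ 2)⁻¹ * Λ.L t η)
      (Icc (2 * η / (2 * (k : ℝ) + 1)) (2 * η / (2 * (k : ℝ) - 1))) t := by
  unfold lambdaRate
  split_ifs with hkE
  · exact Λ.ode_low η hη k hk hkE t ht
  · exact Λ.ode_high η hη k (not_le.1 hkE) hkF t ht

theorem L_le_mul_exp_lambdaRate (hη : 1 < η) {k : ℕ} (hk : 0 < k)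
    (hkF : k ≤ ⌊η ^ ((2:ℝ)/3)⌋₊) :
    Λ.L (2 * η / (2 * k - 1)) η ≤ Λ.L (2 * η / (2 * k + 1)) η * exp (lambdaRate η k * π) := by
  have hk1 : (1 : ℝ) ≤ k := Nat.one_le_cast.2 hk
  exact le_mul_exp_mul_pi_of_hasDerivWithinAt (f := fun τ => Λ.L τ η)
    (div_le_div_of_nonneg_left (by linarith) (by linarith) (by linarith))
    (lambdaRate_nonneg (by linarith) k) (Λ.pos _ _).le
    fun t ht => Λ.hasDerivWithinAt_L hη hk hkF ht

theorem L_two_mul_le (hη : 1 < η) {n : ℕ} (hn : n ≤ ⌊η ^ ((2:ℝ)/3)⌋₊) :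
    Λ.L (2 * η) η ≤
      Λ.L (2 * η / (2 * n + 1)) η * exp ((∑ k ∈ Finset.Ioc 0 n, lambdaRate η k) * π) := by
  induction n with
  | zero => simp
  | succ n ih =>
    have hseg := Λ.L_le_mul_exp_lambdaRate hη n.succ_pos hn
    rw [show 2 * ((n + 1 : ℕ) : ℝ) - 1 = 2 * n + 1 by push_cast; ring] at hseg
    calc Λ.L (2 * η) η
        ≤ Λ.L (2 * η / (2 * n + 1)) η * exp ((∑ k ∈ Finset.Ioc 0 n, lambdaRate η k) * π) :=
          ih (by omega)
      _ ≤ Λ.L (2 * η / (2 * (n + 1 : ℕ) + 1)) η * exp (lambdaRate η (n + 1) * π) *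
            exp ((∑ k ∈ Finset.Ioc 0 n, lambdaRate η k) * π) := by gcongr
      _ = _ := by
          rw [Finset.sum_Ioc_succ_top n.zero_le, mul_assoc, ← exp_add]
          ring_nf

theorem one_div_L_zero_le (hη : 1 < η) :
    1 / Λ.L 0 η ≤ exp (3 * π / 20 * η ^ ((1:ℝ)/3)) := by
  set F := ⌊η ^ ((2:ℝ)/3)⌋₊
  have hstart : Λ.L (2 * η / (2 * F + 1)) η = Λ.L 0 η :=
    Λ.const_init η hη _ ⟨by positivity, le_rfl⟩
  have hchain := Λ.L_two_mul_le hη le_rfl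
  rw [Λ.one_late η hη _ le_rfl, hstart] at hchain
  rw [div_le_iff₀ (Λ.pos 0 η)]
  calc 1 ≤ Λ.L 0 η * exp ((∑ k ∈ Finset.Ioc 0 F, lambdaRate η k) * π) := hchain
    _ ≤ Λ.L 0 η * exp (3 / 20 * η ^ ((1:ℝ)/3) * π) := by
        gcongr
        · exact (Λ.pos 0 η).le
        · exact sum_lambdaRate_le hη
    _ = exp (3 * π / 20 * η ^ ((1:ℝ)/3)) * Λ.L 0 η := by ring_nf

end LambdaData

/-- For `|η| > 1` and `t ≥ 0`, `1 ≤ 1/Λ(t,η) ≤ e^{(3π/20)|η|^{1/3}}`. -/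
theorem stmt_14 (Λ : LambdaData) :
    ∀ η : ℝ, 1 < |η| → ∀ t : ℝ, 0 ≤ t →
      1 ≤ 1 / Λ.L t η ∧ 1 / Λ.L t η ≤ Real.exp (3 * π / 20 * |η| ^ ((1:ℝ)/3)) := by
  intro η hη t ht
  refine ⟨one_le_one_div (Λ.pos t η) (Λ.L_le_one t η), ?_⟩
  rw [← Λ.L_abs]
  calc 1 / Λ.L t |η| ≤ 1 / Λ.L 0 |η| := one_div_le_one_div_of_le (Λ.pos 0 _) (Λ.mono _ hη ht)
    _ ≤ _ := Λ.one_div_L_zero_le hη
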